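/- arXiv:1204.3943 — 2 statements merged into one kernel-verified Lean document; each statement's English description precedes it below -/
import Mathlib

section
/- Let R : [0,r] → Sym(n−1) be continuous with R(t) ≤ ρI for all t, where ρ ≥ 0 and √ρ·r < π. Then for every y ∈ H¹₀((0,r), ℝ^{n−1}), E(R,y) = ∫₀ʳ (|y'|² − ⟨y, R(t)y⟩) dt ≥ E(ρ,y) ≥ 0, with equality E(R,y)=0 only for y = 0. -/
/-!
Coordinatewise, `E(ρ, y) = ∑ᵢ ∫ (yᵢ'² - ρ yᵢ²)`. Since `√ρ r < π`, the Jacobi field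
`s t = sin (√ρ t + δ)` with `δ = (π - √ρ r) / 2` is positive on `[0, r]`, and `h = s' / s` solves
the Riccati equation `h' = -(ρ + h²)`. Integrating `h (u²)'` by parts, with no boundary terms
because `u 0 = u r = 0`, gives Picone's identity `∫ (u'² - ρ u²) = ∫ (u' - h u)² ≥ 0`.
If the energy vanishes then `u' = h u` a.e., so `u / s` is absolutely continuous with vanishing
derivative a.e., hence constant, equal to `u 0 / s 0 = 0`.
Finally `⟪y, R y⟫ ≤ ρ |y|²` pointwise gives `E(ρ, y) ≤ E(R, y)`.
-/

open Matrix MeasureTheory Set Real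
open scoped Interval

section AbsolutelyContinuous

variable {X : Type*} [PseudoMetricSpace X] {a b : ℝ} {u v h σ : ℝ → ℝ}

theorem AbsolutelyContinuousOnInterval.congr {f f' : ℝ → X}
    (hf : AbsolutelyContinuousOnInterval f a b) (hff' : EqOn f f' (uIcc a b)) :
    AbsolutelyContinuousOnInterval f' a b := by
  refine Filter.Tendsto.congr' ?_ hf
  filter_upwards [Filter.eventually_inf_principal.mpr (Filter.Eventually.of_forall fun _ h => h)]
    with E hE
  exact Finset.sum_congr rfl fun i hi => by rw [hff' (hE.1 i hi).1, hff' (hE.1 i hi).2]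

theorem ae_restrict_uIoc_of_ae_uIcc {p : ℝ → Prop} (hp : ∀ᵐ t, t ∈ uIcc a b → p t) :
    ∀ᵐ t ∂volume.restrict (Ι a b), p t :=
  (ae_restrict_iff' measurableSet_uIoc).2 <| by
    filter_upwards [hp] with t ht htI using ht (uIoc_subset_uIcc htI)

theorem AbsolutelyContinuousOnInterval.intervalIntegrable_of_ae_hasDerivAt
    (hu : AbsolutelyContinuousOnInterval u a b) (hv : ∀ᵐ t, t ∈ uIcc a b → HasDerivAt u (v t) t) :
    IntervalIntegrable v volume a b :=
  hu.intervalIntegrable_deriv.congr_ae <| ae_restrict_uIoc_of_ae_uIcc <| by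
    filter_upwards [hv] with t ht htI using (ht htI).deriv

theorem AbsolutelyContinuousOnInterval.eqOn_zero_of_ae_hasDerivAt_mul
    (hu : AbsolutelyContinuousOnInterval u a b) (hua : u a = 0)
    (hu' : ∀ᵐ t, t ∈ uIcc a b → HasDerivAt u (h t * u t) t)
    (hσ : AbsolutelyContinuousOnInterval σ a b)
    (hσ' : ∀ᵐ t, t ∈ uIcc a b → HasDerivAt σ (-(h t * σ t)) t)
    (hσ0 : ∀ t ∈ uIcc a b, σ t ≠ 0) :
    EqOn u 0 (uIcc a b) := by
  obtain ⟨C, hC⟩ := (hu.fun_mul hσ).const_of_ae_hasDerivAt_zero <| by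
    filter_upwards [hu', hσ'] with t hut hσt ht
    exact ((hut ht).fun_mul (hσt ht)).congr_deriv (by ring)
  have hC0 : C = 0 := by rw [← hC a left_mem_uIcc, hua, zero_mul]
  intro t ht
  simpa [hC0, hσ0 t ht] using hC t ht

end AbsolutelyContinuous

section Picone

variable {a b ρ : ℝ} {u v h : ℝ → ℝ}

theorem intervalIntegrable_sub_mul_sq (hu : AbsolutelyContinuousOnInterval u a b)
    (hv : ∀ᵐ t, t ∈ uIcc a b → HasDerivAt u (v t) t)
    (hv2 : IntervalIntegrable (fun t => v t ^ 2) volume a b) (hh : ContinuousOn h (uIcc a b)) :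
    IntervalIntegrable (fun t => (v t - h t * u t) ^ 2) volume a b := by
  have hv1 := hu.intervalIntegrable_of_ae_hasDerivAt hv
  have huc := hu.continuousOn
  have e : (fun t => (v t - h t * u t) ^ 2) =
      fun t => v t ^ 2 - (2 * h t * u t) * v t + (h t * u t) ^ 2 := by
    funext t; ring
  rw [e]
  exact (hv2.sub (hv1.continuousOn_mul (by fun_prop))).add
    (ContinuousOn.intervalIntegrable (by fun_prop))

theorem integral_sub_mul_sq_eq (hu : AbsolutelyContinuousOnInterval u a b) (hua : u a = 0)
    (hub : u b = 0) (hv : ∀ᵐ t, t ∈ uIcc a b → HasDerivAt u (v t) t)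
    (hv2 : IntervalIntegrable (fun t => v t ^ 2) volume a b)
    (hh : AbsolutelyContinuousOnInterval h a b)
    (hh' : ∀ᵐ t, t ∈ uIcc a b → HasDerivAt h (-(ρ + h t ^ 2)) t) :
    ∫ t in a..b, (v t - h t * u t) ^ 2 = ∫ t in a..b, (v t ^ 2 - ρ * u t ^ 2) := by
  have huc := hu.continuousOn
  have hhc := hh.continuousOn
  have hhuv : IntervalIntegrable (fun t => h t * (2 * u t * v t)) volume a b := by
    simpa only [mul_left_comm (h _), ← mul_assoc] using
      (hu.intervalIntegrable_of_ae_hasDerivAt hv).continuousOn_mul (by fun_prop)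
  have hparts : ∫ t in a..b, h t * (2 * u t * v t) = ∫ t in a..b, (ρ + h t ^ 2) * u t ^ 2 := by
    have := hh.integral_mul_deriv_eq_deriv_mul (hu.fun_mul hu)
    simp only [hua, hub, mul_zero, sub_zero, zero_sub, ← intervalIntegral.integral_neg] at this
    refine (intervalIntegral.integral_congr_ae ?_).trans
      (this.trans (intervalIntegral.integral_congr_ae ?_))
    · filter_upwards [hv] with t ht htI
      rw [((ht (uIoc_subset_uIcc htI)).fun_mul (ht (uIoc_subset_uIcc htI))).deriv]
      ring
    · filter_upwards [hh'] with t ht htI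
      rw [(ht (uIoc_subset_uIcc htI)).deriv]
      ring
  rw [← sub_eq_zero, ← intervalIntegral.integral_sub (intervalIntegrable_sub_mul_sq hu hv hv2 hhc)
    (hv2.sub (ContinuousOn.intervalIntegrable (by fun_prop)))]
  have e : (fun t => (v t - h t * u t) ^ 2 - (v t ^ 2 - ρ * u t ^ 2)) =
      fun t => (ρ + h t ^ 2) * u t ^ 2 - h t * (2 * u t * v t) := by
    funext t; ring
  rw [e, intervalIntegral.integral_sub (ContinuousOn.intervalIntegrable (by fun_prop)) hhuv,
    hparts, sub_self]

end Picone

section Comparison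

variable {c δ t : ℝ}

theorem hasDerivAt_mul_cos_div_sin (ht : sin (c * t + δ) ≠ 0) :
    HasDerivAt (fun x => c * cos (c * x + δ) / sin (c * x + δ))
      (-(c ^ 2 + (c * cos (c * t + δ) / sin (c * t + δ)) ^ 2)) t := by
  have hθ : HasDerivAt (fun x => c * x + δ) c t := by
    simpa using ((hasDerivAt_id t).const_mul c).add_const δ
  refine ((hθ.cos.const_mul c).div hθ.sin ht).congr_deriv ?_
  field_simp
  ring

theorem hasDerivAt_inv_sin (ht : sin (c * t + δ) ≠ 0) :
    HasDerivAt (fun x => (sin (c * x + δ))⁻¹)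
      (-(c * cos (c * t + δ) / sin (c * t + δ) * (sin (c * t + δ))⁻¹)) t := by
  have hθ : HasDerivAt (fun x => c * x + δ) c t := by
    simpa using ((hasDerivAt_id t).const_mul c).add_const δ
  refine (hθ.sin.inv ht).congr_deriv ?_
  field_simp

theorem exists_riccati_comparison {ρ r : ℝ} (hρ : 0 ≤ ρ) (hr : 0 ≤ r) (hρr : √ρ * r < π) :
    ∃ h σ : ℝ → ℝ, AbsolutelyContinuousOnInterval h 0 r ∧
      (∀ t ∈ uIcc 0 r, HasDerivAt h (-(ρ + h t ^ 2)) t) ∧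
      AbsolutelyContinuousOnInterval σ 0 r ∧
      (∀ t ∈ uIcc 0 r, HasDerivAt σ (-(h t * σ t)) t) ∧ ∀ t ∈ uIcc 0 r, σ t ≠ 0 := by
  set c := √ρ
  set δ := (π - c * r) / 2 with hδ
  have hsin : ∀ t ∈ uIcc 0 r, sin (c * t + δ) ≠ 0 := by
    intro t ht
    rw [uIcc_of_le hr] at ht
    have : c * t ≤ c * r := mul_le_mul_of_nonneg_left ht.2 (sqrt_nonneg ρ)
    have : 0 ≤ c * t := mul_nonneg (sqrt_nonneg ρ) ht.1
    exact (sin_pos_of_pos_of_lt_pi (by linarith) (by linarith)).ne'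
  refine ⟨fun x => c * cos (c * x + δ) / sin (c * x + δ), fun x => (sin (c * x + δ))⁻¹,
    ?_, fun t ht => ?_, ?_, fun t ht => hasDerivAt_inv_sin (hsin t ht),
    fun t ht => inv_ne_zero (hsin t ht)⟩
  · exact ContDiffOn.absolutelyContinuousOnInterval (by fun_prop (disch := assumption))
  · simpa only [c, sq_sqrt hρ] using hasDerivAt_mul_cos_div_sin (hsin t ht)
  · exact ContDiffOn.absolutelyContinuousOnInterval (by fun_prop (disch := assumption))

end Comparison

section Wirtinger

variable {ρ r : ℝ} {u v : ℝ → ℝ}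

theorem integral_sq_sub_nonneg (hρ : 0 ≤ ρ) (hr : 0 ≤ r) (hρr : √ρ * r < π)
    (hu : AbsolutelyContinuousOnInterval u 0 r) (hu0 : u 0 = 0) (hur : u r = 0)
    (hv : ∀ᵐ t, t ∈ uIcc 0 r → HasDerivAt u (v t) t)
    (hv2 : IntervalIntegrable (fun t => v t ^ 2) volume 0 r) :
    0 ≤ ∫ t in 0..r, (v t ^ 2 - ρ * u t ^ 2) := by
  obtain ⟨h, -, hh, hh', -⟩ := exists_riccati_comparison hρ hr hρr
  rw [← integral_sub_mul_sq_eq hu hu0 hur hv hv2 hh (.of_forall hh')]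
  exact intervalIntegral.integral_nonneg hr fun _ _ => sq_nonneg _

theorem eqOn_zero_of_integral_sq_sub_eq_zero (hρ : 0 ≤ ρ) (hr : 0 ≤ r) (hρr : √ρ * r < π)
    (hu : AbsolutelyContinuousOnInterval u 0 r) (hu0 : u 0 = 0) (hur : u r = 0)
    (hv : ∀ᵐ t, t ∈ uIcc 0 r → HasDerivAt u (v t) t)
    (hv2 : IntervalIntegrable (fun t => v t ^ 2) volume 0 r)
    (h0 : ∫ t in 0..r, (v t ^ 2 - ρ * u t ^ 2) = 0) :
    EqOn u 0 (Icc 0 r) := by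
  obtain ⟨h, σ, hh, hh', hσ, hσ', hσ0⟩ := exists_riccati_comparison hρ hr hρr
  rw [← integral_sub_mul_sq_eq hu hu0 hur hv hv2 hh (.of_forall hh'),
    intervalIntegral.integral_eq_zero_iff_of_le_of_nonneg_ae hr
      (.of_forall fun _ => sq_nonneg _) (intervalIntegrable_sub_mul_sq hu hv hv2 hh.continuousOn),
    Measure.restrict_congr_set Ioc_ae_eq_Icc, Filter.EventuallyEq,
    ae_restrict_iff' measurableSet_Icc, ← uIcc_of_le hr] at h0
  rw [← uIcc_of_le hr]
  refine hu.eqOn_zero_of_ae_hasDerivAt_mul hu0 ?_ hσ (.of_forall hσ') hσ0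
  filter_upwards [hv, h0] with t hvt ht0 ht
  rw [← sub_eq_zero.1 (pow_eq_zero_iff two_ne_zero |>.1 (ht0 ht))]
  exact hvt ht

end Wirtinger

section Coordinates

variable {ι : Type*} [Fintype ι] {a b : ℝ} {g y : ℝ → ι → ℝ}

theorem IntervalIntegrable.eval (hg : IntervalIntegrable g volume a b) (i : ι) :
    IntervalIntegrable (fun t => g t i) volume a b :=
  ⟨hg.1.eval i, hg.2.eval i⟩

theorem absolutelyContinuousOnInterval_apply_of_eq_integral
    (hg : IntervalIntegrable g volume a b) (hy : ∀ t, y t = ∫ s in a..t, g s) (i : ι) :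
    AbsolutelyContinuousOnInterval (fun t => y t i) a b := by
  refine ((hg.eval i).absolutelyContinuousOnInterval_intervalIntegral left_mem_uIcc).congr
    fun t ht => ?_
  rw [hy t]
  exact (ContinuousLinearMap.proj (R := ℝ) (φ := fun _ : ι => ℝ) i).intervalIntegral_comp_comm
    (hg.mono_set (uIcc_subset_uIcc left_mem_uIcc ht))

theorem ae_hasDerivAt_apply_of_eq_integral
    (hg : IntervalIntegrable g volume a b) (hy : ∀ t, y t = ∫ s in a..t, g s) (i : ι) :
    ∀ᵐ t, t ∈ uIcc a b → HasDerivAt (fun t => y t i) (g t i) t := by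
  filter_upwards [hg.ae_hasDerivAt_integral] with t ht htI
  rw [funext hy]
  exact hasDerivAt_pi.1 (ht htI a left_mem_uIcc) i

theorem intervalIntegrable_apply_sq (hg : IntervalIntegrable g volume a b)
    (hg2 : IntervalIntegrable (fun t => g t ⬝ᵥ g t) volume a b) (i : ι) :
    IntervalIntegrable (fun t => g t i ^ 2) volume a b := by
  refine hg2.mono_fun ((hg.eval i).def'.aestronglyMeasurable.pow 2) (.of_forall fun t => ?_)
  simp only [Real.norm_eq_abs, abs_pow, sq_abs, dotProduct, ← sq]
  exact (Finset.single_le_sum (fun j _ => sq_nonneg (g t j)) (Finset.mem_univ i)).trans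
    (le_abs_self _)

theorem integral_dotProduct_sub_eq_sum {ρ : ℝ}
    (hg : ∀ i, IntervalIntegrable (fun t => g t i ^ 2) volume a b)
    (hy : ∀ i, ContinuousOn (fun t => y t i) (uIcc a b)) :
    ∫ t in a..b, (g t ⬝ᵥ g t - ρ * (y t ⬝ᵥ y t)) =
      ∑ i, ∫ t in a..b, (g t i ^ 2 - ρ * y t i ^ 2) := by
  rw [← intervalIntegral.integral_finsetSum fun i _ =>
    (hg i).sub (ContinuousOn.intervalIntegrable (by fun_prop))]
  simp only [dotProduct, Finset.mul_sum, ← Finset.sum_sub_distrib, sq]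

end Coordinates

theorem Matrix.PosSemidef.dotProduct_mulVec_le {n : Type*} [Fintype n] [DecidableEq n]
    {A : Matrix n n ℝ} {ρ : ℝ} (hA : (ρ • 1 - A).PosSemidef) (x : n → ℝ) :
    x ⬝ᵥ A *ᵥ x ≤ ρ * (x ⬝ᵥ x) := by
  have := hA.dotProduct_mulVec_nonneg x
  rw [star_trivial, sub_mulVec, smul_mulVec, one_mulVec, dotProduct_sub, dotProduct_smul,
    smul_eq_mul] at this
  linarith

theorem energy_ge_comparison_general {m : ℕ} {ρ r : ℝ}
    (hρ : 0 ≤ ρ) (hr : 0 < r) (hρr : Real.sqrt ρ * r < Real.pi)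
    (R : ℝ → Matrix (Fin m) (Fin m) ℝ)
    (hRcont : ∀ i j, Continuous fun t => R t i j)
    (hRle : ∀ t ∈ Set.Icc (0:ℝ) r,
      (ρ • (1 : Matrix (Fin m) (Fin m) ℝ) - R t).PosSemidef)
    (g : ℝ → Fin m → ℝ)
    (hg : IntervalIntegrable g MeasureTheory.volume 0 r)
    (hg2 : IntervalIntegrable (fun t => g t ⬝ᵥ g t) MeasureTheory.volume 0 r)
    (y : ℝ → Fin m → ℝ)
    (hy : ∀ t, y t = ∫ s in (0:ℝ)..t, g s)
    (hyr : y r = 0) :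
    (0 ≤ ∫ t in (0:ℝ)..r, (g t ⬝ᵥ g t - ρ * (y t ⬝ᵥ y t))) ∧
    (∫ t in (0:ℝ)..r, (g t ⬝ᵥ g t - ρ * (y t ⬝ᵥ y t))) ≤
      (∫ t in (0:ℝ)..r, (g t ⬝ᵥ g t - y t ⬝ᵥ (R t).mulVec (y t))) ∧
    ((∫ t in (0:ℝ)..r, (g t ⬝ᵥ g t - y t ⬝ᵥ (R t).mulVec (y t))) = 0 →
      ∀ t ∈ Set.Icc (0:ℝ) r, y t = 0) := by
  have hyAC := absolutelyContinuousOnInterval_apply_of_eq_integral hg hy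
  have hy' := ae_hasDerivAt_apply_of_eq_integral hg hy
  have hgi := intervalIntegrable_apply_sq hg hg2
  have hy0 (i : Fin m) : y 0 i = 0 := by simp [hy]
  have hyr (i : Fin m) : y r i = 0 := by simp [hyr]
  have hsum := integral_dotProduct_sub_eq_sum (ρ := ρ) hgi fun i => (hyAC i).continuousOn
  have hcoord (i : Fin m) :=
    integral_sq_sub_nonneg hρ hr.le hρr (hyAC i) (hy0 i) (hyr i) (hy' i) (hgi i)
  have hEρ : 0 ≤ ∫ t in (0:ℝ)..r, (g t ⬝ᵥ g t - ρ * (y t ⬝ᵥ y t)) :=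
    hsum ▸ Finset.sum_nonneg fun i _ => hcoord i
  have hyc : ContinuousOn y (uIcc 0 r) := continuousOn_pi.2 fun i => (hyAC i).continuousOn
  have hRc : Continuous R := continuous_pi fun i => continuous_pi (hRcont i)
  have hEρR : (∫ t in (0:ℝ)..r, (g t ⬝ᵥ g t - ρ * (y t ⬝ᵥ y t))) ≤
      ∫ t in (0:ℝ)..r, (g t ⬝ᵥ g t - y t ⬝ᵥ (R t).mulVec (y t)) :=
    intervalIntegral.integral_mono_on hr.le
      (hg2.sub (ContinuousOn.intervalIntegrable (by fun_prop)))
      (hg2.sub (ContinuousOn.intervalIntegrable (by fun_prop)))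
      fun t ht => sub_le_sub_left ((hRle t ht).dotProduct_mulVec_le (y t)) _
  refine ⟨hEρ, hEρR, fun hER t ht => funext fun i => ?_⟩
  have hEρ0 := hsum ▸ le_antisymm (hEρR.trans hER.le) hEρ
  exact eqOn_zero_of_integral_sq_sub_eq_zero hρ hr.le hρr (hyAC i) (hy0 i) (hyr i) (hy' i) (hgi i)
    ((Finset.sum_eq_zero_iff_of_nonneg fun i _ => hcoord i).1 hEρ0 i (Finset.mem_univ i)) ht

/-- For continuous symmetric `R(t) ≤ ρI`, `0 ≤ ρ`, `0 < r`, `√ρ·r < π`, and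
`y ∈ H¹₀((0,r), ℝ^{n−1})` (given as `y t = ∫₀ᵗ g` with `g` square-integrable
and `y r = 0`): `E(R,y) = ∫₀ʳ (|y'|² − ⟨y, R y⟩) ≥ E(ρ,y) ≥ 0`, and
`E(R,y) = 0` only for `y ≡ 0` on `[0,r]`. -/
theorem energy_ge_comparison {m : ℕ} {ρ r : ℝ}
    (hρ : 0 ≤ ρ) (hr : 0 < r) (hρr : Real.sqrt ρ * r < Real.pi)
    (R : ℝ → Matrix (Fin m) (Fin m) ℝ)
    (hRcont : ∀ i j, Continuous fun t => R t i j)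
    (hRsymm : ∀ t ∈ Set.Icc (0:ℝ) r, (R t).IsSymm)
    (hRle : ∀ t ∈ Set.Icc (0:ℝ) r,
      (ρ • (1 : Matrix (Fin m) (Fin m) ℝ) - R t).PosSemidef)
    (g : ℝ → Fin m → ℝ)
    (hg : IntervalIntegrable g MeasureTheory.volume 0 r)
    (hg2 : IntervalIntegrable (fun t => g t ⬝ᵥ g t) MeasureTheory.volume 0 r)
    (y : ℝ → Fin m → ℝ)
    (hy : ∀ t, y t = ∫ s in (0:ℝ)..t, g s)
    (hyr : y r = 0) :
    (0 ≤ ∫ t in (0:ℝ)..r, (g t ⬝ᵥ g t - ρ * (y t ⬝ᵥ y t))) ∧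
    (∫ t in (0:ℝ)..r, (g t ⬝ᵥ g t - ρ * (y t ⬝ᵥ y t))) ≤
      (∫ t in (0:ℝ)..r, (g t ⬝ᵥ g t - y t ⬝ᵥ (R t).mulVec (y t))) ∧
    ((∫ t in (0:ℝ)..r, (g t ⬝ᵥ g t - y t ⬝ᵥ (R t).mulVec (y t))) = 0 →
      ∀ t ∈ Set.Icc (0:ℝ) r, y t = 0) :=
  energy_ge_comparison_general hρ hr hρr R hRcont hRle g hg hg2 y hy hyr
end

section
/- For a fixed symmetric positive definite (n−1)×(n−1) matrix Z and α > 0, min { Tr(A²Z) : A symmetric, Tr(A) ≥ α } = α² / Tr(Z^{-1}), attained at A = α Z^{-1}/Tr(Z^{-1}). -/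
/-! Completing the square in the quadratic form `A ↦ Tr(A²Z)`: for any `c`,
`Tr(A²Z) = Tr((A - cZ⁻¹) Z (A - cZ⁻¹)) + 2c Tr A - c² Tr Z⁻¹`.
With `c = α / Tr Z⁻¹` and `Tr A ≥ α` the last two terms are at least `α² / Tr Z⁻¹`, and the
first is nonnegative, vanishing only at `A = cZ⁻¹`. -/

open Matrix

namespace Matrix

section

variable {n : Type*} [Fintype n] [DecidableEq n]

theorem trace_sq_mul_eq_trace_sub_smul_inv {R : Type*} [CommRing R] {Z : Matrix n n R}
    (hZ : IsUnit Z.det) (A : Matrix n n R) (c : R) :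
    (A ^ 2 * Z).trace =
      ((A - c • Z⁻¹) * Z * (A - c • Z⁻¹)).trace + 2 * c * A.trace - c ^ 2 * Z⁻¹.trace := by
  have hexpand : (A - c • Z⁻¹) * Z * (A - c • Z⁻¹) = A * Z * A - (2 * c) • A + c ^ 2 • Z⁻¹ := by
    simp only [sub_mul, mul_sub, smul_mul_assoc, mul_smul_comm, mul_assoc,
      mul_nonsing_inv Z hZ, nonsing_inv_mul Z hZ, mul_one, one_mul]
    module
  rw [hexpand, sq, mul_assoc, trace_mul_comm A]
  simp only [trace_add, trace_sub, trace_smul, smul_eq_mul, mul_assoc]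
  ring

theorem sq_div_trace_inv_add_trace_le_trace_sq_mul {K : Type*} [Field K] [LinearOrder K]
    [IsStrictOrderedRing K] {Z : Matrix n n K} (hZ : IsUnit Z.det) (ht : 0 < Z⁻¹.trace) {α : K} (hα : 0 ≤ α)
    {A : Matrix n n K} (hA : α ≤ A.trace) :
    α ^ 2 / Z⁻¹.trace + ((A - (α / Z⁻¹.trace) • Z⁻¹) * Z * (A - (α / Z⁻¹.trace) • Z⁻¹)).trace
      ≤ (A ^ 2 * Z).trace := by
  rw [trace_sq_mul_eq_trace_sub_smul_inv hZ A (α / Z⁻¹.trace)]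
  set c := α / Z⁻¹.trace
  have hc : 0 ≤ c := div_nonneg hα ht.le
  have hct : c * Z⁻¹.trace = α := div_mul_cancel₀ α ht.ne'
  have hα2 : α ^ 2 / Z⁻¹.trace = α * c := by rw [sq, mul_div_assoc]
  have hc2 : c ^ 2 * Z⁻¹.trace = α * c := by rw [sq, mul_assoc, hct, mul_comm]
  linarith [mul_le_mul_of_nonneg_left hA hc]

end

open scoped ComplexOrder in
theorem PosDef.trace_conjTranspose_mul_mul_same_eq_zero_iff {n m 𝕜 : Type*} [Fintype n]
    [Fintype m] [RCLike 𝕜] {Z : Matrix n n 𝕜} (hZ : Z.PosDef) {B : Matrix n m 𝕜} :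
    (Bᴴ * Z * B).trace = 0 ↔ B = 0 := by
  rw [(hZ.posSemidef.conjTranspose_mul_mul_same B).trace_eq_zero_iff]
  refine ⟨fun h ↦ ext_iff_mulVec.mpr fun v ↦ ?_, fun h ↦ by simp [h]⟩
  have hquad : star (B *ᵥ v) ⬝ᵥ Z *ᵥ (B *ᵥ v) = star v ⬝ᵥ (Bᴴ * Z * B) *ᵥ v := by
    simp only [star_mulVec, dotProduct_mulVec, vecMul_vecMul]
  rw [h, zero_mulVec, dotProduct_zero] at hquad
  by_contra hv
  exact (hZ.dotProduct_mulVec_pos (zero_mulVec v ▸ hv)).ne' hquad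

end Matrix

/-- Pointwise minimization: for a symmetric positive definite matrix `Z` and
`α > 0`, the minimum of `Tr(A²Z)` over symmetric `A` with `Tr(A) ≥ α` is
`α²/Tr(Z⁻¹)`, attained (uniquely) at `A₀ = α Z⁻¹ / Tr(Z⁻¹)`. -/
theorem min_trace_quadratic {m : ℕ} (hm : 1 ≤ m)
    {Z : Matrix (Fin m) (Fin m) ℝ} (hZ : Z.PosDef) {α : ℝ} (hα : 0 < α) :
    let A₀ := (α / Z⁻¹.trace) • Z⁻¹
    A₀.IsSymm ∧ A₀.PosDef ∧ A₀.trace = α ∧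
      (A₀ ^ 2 * Z).trace = α ^ 2 / Z⁻¹.trace ∧
      (∀ A : Matrix (Fin m) (Fin m) ℝ, A.IsSymm → α ≤ A.trace →
        α ^ 2 / Z⁻¹.trace ≤ (A ^ 2 * Z).trace) ∧
      (∀ A : Matrix (Fin m) (Fin m) ℝ, A.IsSymm → α ≤ A.trace →
        (A ^ 2 * Z).trace = α ^ 2 / Z⁻¹.trace → A = A₀) := by
  intro A₀
  have : Nonempty (Fin m) := ⟨⟨0, hm⟩⟩
  have ht : 0 < Z⁻¹.trace := hZ.inv.trace_pos
  have hdet : IsUnit Z.det := hZ.isUnit.map detMonoidHom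
  have hA₀ : A₀.PosDef := hZ.inv.smul (div_pos hα ht)
  have htr : A₀.trace = α := by
    rw [trace_smul, smul_eq_mul, div_mul_cancel₀ α ht.ne']
  have hbound {A : Matrix (Fin m) (Fin m) ℝ} (hA : A.IsSymm) (hαA : α ≤ A.trace) :
      α ^ 2 / Z⁻¹.trace + ((A - A₀)ᴴ * Z * (A - A₀)).trace ≤ (A ^ 2 * Z).trace := by
    rw [((isHermitian_iff_isSymm.mpr hA).sub hA₀.isHermitian).eq]
    exact sq_div_trace_inv_add_trace_le_trace_sq_mul hdet ht hα.le hαA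
  have hnonneg (A : Matrix (Fin m) (Fin m) ℝ) : 0 ≤ ((A - A₀)ᴴ * Z * (A - A₀)).trace :=
    (hZ.posSemidef.conjTranspose_mul_mul_same _).trace_nonneg
  refine ⟨isHermitian_iff_isSymm.mp hA₀.isHermitian, hA₀, htr, ?_,
    fun A hA hαA ↦ by linarith [hbound hA hαA, hnonneg A], fun A hA hαA heq ↦ ?_⟩
  · rw [trace_sq_mul_eq_trace_sub_smul_inv hdet A₀ (α / Z⁻¹.trace), sub_self A₀, zero_mul,
      zero_mul, trace_zero, htr]
    field_simp
    ring
  · refine sub_eq_zero.mp (hZ.trace_conjTranspose_mul_mul_same_eq_zero_iff.mp ?_)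
    linarith [hbound hA hαA, hnonneg A]
end
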